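/- Let d ∈ ℕ, Φ = (φ₀,…,φ_d) ∈ ℝ^{d+1} and s ∈ {0,1}^d, with d₁ the Hamming weight of s and d₂ = d − d₁, and let P and Q be the (1,1) and (1,2) entries of the M-QSP unitary M_{Φ,s}. Then there exist complex coefficients c_{jk} and c̃_{jk}, indexed by integers j ∈ [−d₁, d₁] and k ∈ [−d₂, d₂], such that for all x₁, x₂ ∈ ℝ: P(x₁,x₂) = Σ_{j=−d₁}^{d₁} Σ_{k=−d₂}^{d₂} c_{jk} e^{ijx₁} e^{ikx₂} and Q(x₁,x₂) = Σ_{j=−d₁}^{d₁} Σ_{k=−d₂}^{d₂} c̃_{jk} e^{ijx₁} e^{ikx₂}. -/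

import Mathlib

/-!
STATEMENT 3 (M-QSP: Laurent polynomial form of the entries).
-/

open Complex Matrix
open scoped Matrix

noncomputable def Wgate (x : ℝ) : Matrix (Fin 2) (Fin 2) ℂ :=
  !![(Real.cos x : ℂ), (Real.sin x : ℂ) * Complex.I;
     (Real.sin x : ℂ) * Complex.I, (Real.cos x : ℂ)]

noncomputable def Zgate (φ : ℝ) : Matrix (Fin 2) (Fin 2) ℂ :=
  !![Complex.exp ((φ : ℂ) * Complex.I), 0;
     0, Complex.exp (-(φ : ℂ) * Complex.I)]

/-- The M-QSP unitary
`M_{Φ,s}(x₁,x₂) = Z(φ₀)·∏_{k=1}^d (W(x₁)^{s_k}·W(x₂)^{1-s_k}·Z(φ_k))`,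
where each `s k ∈ {0,1}`. -/
noncomputable def Mmqsp (d : ℕ) (Φ : Fin (d + 1) → ℝ) (s : Fin d → ℕ)
    (x₁ x₂ : ℝ) : Matrix (Fin 2) (Fin 2) ℂ :=
  Zgate (Φ 0) *
    (List.ofFn (fun k : Fin d =>
      Wgate x₁ ^ (s k) * Wgate x₂ ^ (1 - s k) * Zgate (Φ k.succ))).prod

/-!
Since `cos x = (e^{ix} + e^{-ix})/2` and `i sin x = (e^{ix} - e^{-ix})/2`, the gate `W(x)` is
`e^{ix} A₊ + e^{-ix} A₋` for constant matrices `A±`. Hence `W(x₁)`, `W(x₂)` and `Z(φ)` are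
matrix-valued trigonometric polynomials of bidegree `(1,0)`, `(0,1)` and `(0,0)`. Bidegrees add
under multiplication, because products of spanning terms `e^{i(j x₁ + k x₂)} a` are again of this
form, so `M_{Φ,s}` has bidegree `(d₁, d - d₁)` and each of its entries has the stated expansion.
-/

noncomputable def fourierMode (p : ℤ × ℤ) (x₁ x₂ : ℝ) : ℂ :=
  exp (I * p.1 * x₁) * exp (I * p.2 * x₂)

lemma fourierMode_zero : fourierMode 0 = 1 := by
  funext x₁ x₂; simp [fourierMode]

lemma fourierMode_add (p q : ℤ × ℤ) : fourierMode (p + q) = fourierMode p * fourierMode q := by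
  funext x₁ x₂
  simp only [fourierMode, Prod.fst_add, Prod.snd_add, Int.cast_add, Pi.mul_apply]
  rw [mul_add, add_mul, mul_add, add_mul, exp_add, exp_add]
  ring

noncomputable def degBox (n : ℕ × ℕ) : Finset (ℤ × ℤ) :=
  Finset.Icc (-(n.1 : ℤ)) n.1 ×ˢ Finset.Icc (-(n.2 : ℤ)) n.2

lemma mem_degBox {n : ℕ × ℕ} {p : ℤ × ℤ} : p ∈ degBox n ↔ |p.1| ≤ n.1 ∧ |p.2| ≤ n.2 := by
  simp [degBox, abs_le]

lemma degBox_mono {m n : ℕ × ℕ} (h : m ≤ n) : degBox m ⊆ degBox n := by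
  intro p hp
  rw [mem_degBox] at hp ⊢
  have := Prod.mk_le_mk.mp h
  omega

lemma add_mem_degBox {m n : ℕ × ℕ} {p q : ℤ × ℤ} (hp : p ∈ degBox m) (hq : q ∈ degBox n) :
    p + q ∈ degBox (m + n) := by
  rw [mem_degBox] at *
  simp only [Prod.fst_add, Prod.snd_add, Nat.cast_add]
  constructor <;> exact (abs_add_le _ _).trans (by omega)

section TrigPoly

variable (A : Type*) [Semiring A] [Algebra ℂ A]

noncomputable def trigPoly (n : ℕ × ℕ) : Submodule ℂ (ℝ → ℝ → A) :=
  Submodule.span ℂ {F | ∃ p ∈ degBox n, ∃ a : A, F = fun x₁ x₂ => fourierMode p x₁ x₂ • a}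

variable {A}

lemma fourierMode_smul_mem_trigPoly {n : ℕ × ℕ} {p : ℤ × ℤ} (hp : p ∈ degBox n) (a : A) :
    (fun x₁ x₂ => fourierMode p x₁ x₂ • a) ∈ trigPoly A n :=
  Submodule.subset_span ⟨p, hp, a, rfl⟩

lemma const_mem_trigPoly (a : A) (n : ℕ × ℕ) : (fun _ _ => a) ∈ trigPoly A n := by
  simpa [fourierMode_zero] using fourierMode_smul_mem_trigPoly (p := 0) (by simp [mem_degBox]) a

lemma trigPoly_mono {m n : ℕ × ℕ} (h : m ≤ n) : trigPoly A m ≤ trigPoly A n :=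
  Submodule.span_mono fun _ ⟨p, hp, a, hF⟩ => ⟨p, degBox_mono h hp, a, hF⟩

lemma trigPoly_mul_le (m n : ℕ × ℕ) : trigPoly A m * trigPoly A n ≤ trigPoly A (m + n) := by
  rw [trigPoly, trigPoly, Submodule.span_mul_span, Submodule.span_le, Set.mul_subset_iff]
  rintro _ ⟨p, hp, a, rfl⟩ _ ⟨q, hq, b, rfl⟩
  rw [SetLike.mem_coe]
  convert fourierMode_smul_mem_trigPoly (add_mem_degBox hp hq) (a * b) using 1
  funext x₁ x₂
  simp only [Pi.mul_apply, smul_mul_smul_comm, fourierMode_add]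

/-- `SetLike.GradedMonoid` only asks for `1 ∈ A 0` and `A m * A n ⊆ A (m + n)`, so it also
describes this filtration, which is far from a direct sum decomposition. -/
instance : SetLike.GradedMonoid (trigPoly A) where
  one_mem := const_mem_trigPoly 1 0
  mul_mem m n _ _ hF hG := trigPoly_mul_le m n (Submodule.mul_mem_mul hF hG)

lemma exists_coeff_of_mem_trigPoly {n : ℕ × ℕ} {F : ℝ → ℝ → A} (hF : F ∈ trigPoly A n) :
    ∃ c : ℤ × ℤ → A, F = fun x₁ x₂ => ∑ p ∈ degBox n, fourierMode p x₁ x₂ • c p := by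
  induction hF using Submodule.span_induction with
  | mem F hF =>
    obtain ⟨p, hp, a, rfl⟩ := hF
    refine ⟨Pi.single p a, ?_⟩
    funext x₁ x₂
    rw [Finset.sum_eq_single_of_mem p hp fun q _ hq => by simp [hq], Pi.single_eq_same]
  | zero => exact ⟨0, by funext; simp⟩
  | add F G _ _ hF hG =>
    obtain ⟨c, rfl⟩ := hF
    obtain ⟨c', rfl⟩ := hG
    exact ⟨c + c', by funext; simp [smul_add, Finset.sum_add_distrib]⟩
  | smul z F _ hF =>
    obtain ⟨c, rfl⟩ := hF
    exact ⟨z • c, by funext; simp [Finset.smul_sum, smul_comm z]⟩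

end TrigPoly

lemma Wgate_eq_exp (x : ℝ) :
    Wgate x = (exp (I * x) / 2) • !![1, 1; 1, 1] + (exp (-(I * x)) / 2) • !![1, -1; -1, 1] := by
  have hcos : Complex.cos x = (exp (I * x) + exp (-(I * x))) / 2 := by
    rw [Complex.cos, mul_comm]; ring_nf
  have hsin : Complex.sin x * I = (exp (I * x) - exp (-(I * x))) / 2 := by
    rw [Complex.sin, mul_comm I]; ring_nf; simp; ring
  ext i j
  fin_cases i <;> fin_cases j <;> simp [Wgate, hcos, hsin] <;> ring

lemma Wgate_fst_mem_trigPoly : (fun x₁ (_ : ℝ) => Wgate x₁) ∈ trigPoly _ (1, 0) := by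
  have h : (fun x₁ (_ : ℝ) => Wgate x₁) =
      (fun x₁ x₂ => fourierMode (1, 0) x₁ x₂ • ((1 / 2 : ℂ) • !![1, 1; 1, 1])) +
      (fun x₁ x₂ => fourierMode (-1, 0) x₁ x₂ • ((1 / 2 : ℂ) • !![1, -1; -1, 1])) := by
    funext x₁ x₂
    simp [Wgate_eq_exp, fourierMode, div_eq_mul_inv]
  rw [h]
  exact add_mem (fourierMode_smul_mem_trigPoly (by decide) _)
    (fourierMode_smul_mem_trigPoly (by decide) _)

lemma Wgate_snd_mem_trigPoly : (fun (_ : ℝ) x₂ => Wgate x₂) ∈ trigPoly _ (0, 1) := by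
  have h : (fun (_ : ℝ) x₂ => Wgate x₂) =
      (fun x₁ x₂ => fourierMode (0, 1) x₁ x₂ • ((1 / 2 : ℂ) • !![1, 1; 1, 1])) +
      (fun x₁ x₂ => fourierMode (0, -1) x₁ x₂ • ((1 / 2 : ℂ) • !![1, -1; -1, 1])) := by
    funext x₁ x₂
    simp [Wgate_eq_exp, fourierMode, div_eq_mul_inv]
  rw [h]
  exact add_mem (fourierMode_smul_mem_trigPoly (by decide) _)
    (fourierMode_smul_mem_trigPoly (by decide) _)

lemma Mmqsp_mem_trigPoly (d : ℕ) (Φ : Fin (d + 1) → ℝ) (s : Fin d → ℕ) :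
    (fun x₁ x₂ => Mmqsp d Φ s x₁ x₂) ∈ trigPoly _ (∑ k, s k, ∑ k, (1 - s k)) := by
  have hfactor (k : Fin d) :
      (fun x₁ x₂ => Wgate x₁ ^ s k * Wgate x₂ ^ (1 - s k) * Zgate (Φ k.succ)) ∈
        trigPoly _ (s k • (1, 0) + (1 - s k) • (0, 1) + 0) := by
    refine SetLike.mul_mem_graded (SetLike.mul_mem_graded ?_ ?_) (const_mem_trigPoly _ 0)
    · exact SetLike.pow_mem_graded _ Wgate_fst_mem_trigPoly
    · exact SetLike.pow_mem_graded _ Wgate_snd_mem_trigPoly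
  have hprod := SetLike.mul_mem_graded (const_mem_trigPoly (Zgate (Φ 0)) 0)
    (SetLike.list_prod_ofFn_mem_graded _ _ hfactor)
  convert hprod using 2
  · rw [List.sum_ofFn]
    ext <;> simp [Prod.fst_sum, Prod.snd_sum]
  · funext x₁ x₂
    simp only [Mmqsp, Pi.mul_apply, Pi.list_prod_apply, List.map_ofFn]
    rfl

theorem mqsp_laurent_form (d : ℕ) (Φ : Fin (d + 1) → ℝ)
    (s : Fin d → ℕ) (hs : ∀ k, s k ≤ 1)
    (d₁ d₂ : ℕ) (hd₁ : d₁ = ∑ k, s k) (hd₂ : d₂ = d - d₁) :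
    ∃ c ctil : ℤ → ℤ → ℂ,
      (∀ x₁ x₂ : ℝ,
        Mmqsp d Φ s x₁ x₂ 0 0 =
          ∑ j ∈ Finset.Icc (-(d₁ : ℤ)) (d₁ : ℤ),
            ∑ k ∈ Finset.Icc (-(d₂ : ℤ)) (d₂ : ℤ),
              c j k * Complex.exp (Complex.I * (j : ℂ) * (x₁ : ℂ)) *
                Complex.exp (Complex.I * (k : ℂ) * (x₂ : ℂ))) ∧
      (∀ x₁ x₂ : ℝ,
        Mmqsp d Φ s x₁ x₂ 0 1 =
          ∑ j ∈ Finset.Icc (-(d₁ : ℤ)) (d₁ : ℤ),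
            ∑ k ∈ Finset.Icc (-(d₂ : ℤ)) (d₂ : ℤ),
              ctil j k * Complex.exp (Complex.I * (j : ℂ) * (x₁ : ℂ)) *
                Complex.exp (Complex.I * (k : ℂ) * (x₂ : ℂ))) := by
  have hcount : ∑ k, (1 - s k) + ∑ k, s k = d := by
    rw [← Finset.sum_add_distrib]
    simp [Nat.sub_add_cancel (hs _)]
  have hdeg : (∑ k, s k, ∑ k, (1 - s k)) ≤ (d₁, d₂) := Prod.mk_le_mk.mpr ⟨hd₁.ge, by omega⟩
  obtain ⟨c, hc⟩ := exists_coeff_of_mem_trigPoly (trigPoly_mono hdeg (Mmqsp_mem_trigPoly d Φ s))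
  refine ⟨fun j k => c (j, k) 0 0, fun j k => c (j, k) 0 1, fun x₁ x₂ => ?_, fun x₁ x₂ => ?_⟩ <;>
  · rw [congrFun₂ hc x₁ x₂, Matrix.sum_apply, degBox, Finset.sum_product]
    refine Finset.sum_congr rfl fun j _ => Finset.sum_congr rfl fun k _ => ?_
    simp only [Matrix.smul_apply, smul_eq_mul, fourierMode]
    ring
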